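/- Let K be a compact metric space and F : K → ℝ the pointwise limit of continuous functions (gₙ) on K such that K_n(G,(δᵢ)) ≠ ∅ for some positive reals δ₁,…,δₙ, where K₀(G,(δᵢ)) = K and K_{i+1}(G,(δⱼ)) = {k ∈ K_i : osc_{K_i}(G,k) ≥ δ_{i+1}}. Then for every sequence (gₙ)ₙ₌₀^∞ ⊆ C(K) with g₀ ≡ 0 converging pointwise to G, sup_{k∈K} Σₙ |g_{n+1}(k) − gₙ(k)| ≥ (1/4) Σᵢ₌₁ⁿ δᵢ. -/

import Mathlib

open Filter

/-- The oscillation of `F` restricted to `L` at `x` is at least `δ`. -/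
def oscGE {K : Type*} [TopologicalSpace K] (F : K → ℝ) (L : Set K) (x : K) (δ : ℝ) : Prop :=
  ∀ U ∈ nhds x, ∀ η < δ, ∃ y ∈ L ∩ U, ∃ z ∈ L ∩ U, η < F y - F z

/-- Derived sets with varying thresholds: `K₀ = K`,
`K_{i+1}(F,(δⱼ)) = {k ∈ K_i : osc_{K_i}(F,k) ≥ δ_{i+1}}`. -/
def oscDerivedSetSeq {K : Type*} [TopologicalSpace K] (F : K → ℝ) (δ : ℕ → ℝ) : ℕ → Set K
  | 0 => Set.univ
  | n + 1 => {x ∈ oscDerivedSetSeq F δ n | oscGE F (oscDerivedSetSeq F δ n) x (δ (n + 1))}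

/-! Let `x ∈ K_n`. Each time `x ∈ K_{i+1}`, the oscillation of `G` on `K_i` at `x` is at least
`δ_{i+1}`, so arbitrarily close to `x` there is a point `w ∈ K_i` where `G w` is about
`δ_{i+1}/2` away from `g_M w`. Near `x` the first `M` steps of the variation of `(g_m)` have
barely changed (they are continuous), and going on to a stage `N` where `g_N w ≈ G w` adds about
`δ_{i+1}/2` more. Descending from `K_n` to `K_0` this way yields a point and a stage where the
variation is at least `(1/2) Σ δᵢ - ε`. -/

open Topology Finset

def partialVariation (a : ℕ → ℝ) (N : ℕ) : ℝ := ∑ m ∈ range N, |a (m + 1) - a m|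

lemma partialVariation_zero (a : ℕ → ℝ) : partialVariation a 0 = 0 := by
  simp [partialVariation]

lemma partialVariation_add_abs_sub_le (a : ℕ → ℝ) {M N : ℕ} (hMN : M ≤ N) :
    partialVariation a M + |a N - a M| ≤ partialVariation a N := by
  have htel : |a N - a M| ≤ ∑ m ∈ Ico M N, |a (m + 1) - a m| := by
    simpa only [Real.dist_eq, abs_sub_comm] using dist_le_Ico_sum_dist a hMN
  have hsplit := sum_range_add_sum_Ico (fun m => |a (m + 1) - a m|) hMN
  rw [partialVariation, partialVariation, ← hsplit]
  linarith

lemma exists_partialVariation_gt_of_tendsto {a : ℕ → ℝ} {l : ℝ}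
    (ha : Tendsto a atTop (𝓝 l)) (M : ℕ) {ε : ℝ} (hε : 0 < ε) :
    ∃ N, partialVariation a M + |l - a M| - ε < partialVariation a N := by
  have hlim : Tendsto (fun N => |a N - a M|) atTop (𝓝 |l - a M|) :=
    (ha.sub_const _).abs
  obtain ⟨N, hN, hMN⟩ :=
    ((hlim.eventually (lt_mem_nhds (sub_lt_self _ hε))).and (eventually_ge_atTop M)).exists
  exact ⟨N, by linarith [partialVariation_add_abs_sub_le a hMN]⟩

lemma continuous_partialVariation {K : Type*} [TopologicalSpace K] {g : ℕ → K → ℝ}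
    (hg : ∀ m, Continuous (g m)) (N : ℕ) :
    Continuous fun x => partialVariation (fun m => g m x) N := by
  unfold partialVariation
  fun_prop

namespace oscGE

variable {K : Type*} [TopologicalSpace K] {F : K → ℝ} {L : Set K} {x : K} {d : ℝ}

lemma exists_half_lt_abs_sub (hx : oscGE F L x d) {h : K → ℝ} (hh : ContinuousAt h x)
    {U : Set K} (hU : U ∈ 𝓝 x) {ε : ℝ} (hε : 0 < ε) :
    ∃ w ∈ L ∩ U, d / 2 - ε < |F w - h w| := by
  have hnear : ∀ᶠ u in 𝓝 x, |h u - h x| < ε / 2 := by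
    simpa only [Real.dist_eq] using Metric.tendsto_nhds.mp hh (ε / 2) (half_pos hε)
  obtain ⟨y, ⟨hyL, hyU, hy⟩, z, ⟨hzL, hzU, hz⟩, hyz⟩ :=
    hx _ (inter_mem hU hnear) (d - ε) (sub_lt_self d hε)
  simp only [Set.mem_ofPred_eq, abs_lt] at hy hz
  -- `F y - F z > d - ε`, so `F y` or `F z` lies at least `(d - ε)/2` away from `h x`.
  by_cases hfar : (d - ε) / 2 < F y - h x
  · exact ⟨y, ⟨hyL, hyU⟩, by linarith [le_abs_self (F y - h y)]⟩
  · exact ⟨z, ⟨hzL, hzU⟩, by linarith [neg_abs_le (F z - h z)]⟩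

end oscGE

section

variable {K : Type*} [TopologicalSpace K] {G : K → ℝ} {g : ℕ → K → ℝ}

lemma exists_partialVariation_gt_of_oscGE (hg : ∀ m, Continuous (g m))
    (hlim : ∀ k, Tendsto (fun m => g m k) atTop (𝓝 (G k))) {L : Set K} {x : K} {d : ℝ}
    (hx : oscGE G L x d) (M : ℕ) {ε : ℝ} (hε : 0 < ε) :
    ∃ w ∈ L, ∃ N,
      partialVariation (fun m => g m x) M + d / 2 - ε < partialVariation (fun m => g m w) N := by
  have hU : {u | partialVariation (fun m => g m x) M - ε / 2 <
      partialVariation (fun m => g m u) M} ∈ 𝓝 x :=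
    (continuous_partialVariation hg M).continuousAt.preimage_mem_nhds
      (Ioi_mem_nhds (sub_lt_self _ (by positivity)))
  obtain ⟨w, ⟨hwL, hwU⟩, hw⟩ :=
    hx.exists_half_lt_abs_sub (hg M).continuousAt hU (by positivity : 0 < ε / 4)
  obtain ⟨N, hN⟩ :=
    exists_partialVariation_gt_of_tendsto (hlim w) M (by positivity : 0 < ε / 4)
  exact ⟨w, hwL, N, by simp only [Set.mem_ofPred_eq] at hwU; linarith⟩

lemma exists_partialVariation_gt_of_mem_oscDerivedSetSeq (hg : ∀ m, Continuous (g m))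
    (hlim : ∀ k, Tendsto (fun m => g m k) atTop (𝓝 (G k))) (δ : ℕ → ℝ) (j : ℕ) :
    ∀ x ∈ oscDerivedSetSeq G δ j, ∀ (M : ℕ) {ε : ℝ}, 0 < ε →
      ∃ k N, partialVariation (fun m => g m x) M + (1 / 2) * ∑ i ∈ range j, δ (i + 1) - ε <
        partialVariation (fun m => g m k) N := by
  induction j with
  | zero =>
    intro x _ M ε hε
    exact ⟨x, M, by simpa using hε⟩
  | succ j ih =>
    rintro x ⟨hxj, hosc⟩ M ε hε
    obtain ⟨w, hwj, N, hw⟩ := exists_partialVariation_gt_of_oscGE hg hlim hosc M (half_pos hε)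
    obtain ⟨k, N', hk⟩ := ih w hwj N (half_pos hε)
    exact ⟨k, N', by rw [sum_range_succ]; linarith⟩

end

theorem stmt7_general {K : Type*} [MetricSpace K] (G : K → ℝ)
    (δ : ℕ → ℝ) (n : ℕ)
    (hne : (oscDerivedSetSeq G δ n).Nonempty)
    (g : ℕ → K → ℝ) (hg : ∀ m, Continuous (g m))
    (hlim : ∀ k, Tendsto (fun m => g m k) atTop (nhds (G k))) :
    ∀ C : ℝ, (∀ (k : K) (N : ℕ), ∑ m ∈ Finset.range N, |g (m+1) k - g m k| ≤ C) →
      (1 / 4) * ∑ i ∈ Finset.range n, δ (i + 1) ≤ C := by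
  intro C hC
  have hvar : ∀ k N, partialVariation (fun m => g m k) N ≤ C := hC
  obtain ⟨x, hx⟩ := hne
  have hC_nonneg : 0 ≤ C := by simpa only [partialVariation_zero] using hvar x 0
  have hhalf : (1 / 2) * ∑ i ∈ range n, δ (i + 1) ≤ C := by
    refine le_of_forall_sub_le fun ε hε => ?_
    obtain ⟨k, N, hk⟩ :=
      exists_partialVariation_gt_of_mem_oscDerivedSetSeq hg hlim δ n x hx 0 hε
    rw [partialVariation_zero] at hk
    linarith [hvar k N]
  rcases le_total 0 (∑ i ∈ range n, δ (i + 1)) with hS | hS <;> linarith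

/-- If `K_n(G,(δᵢ)) ≠ ∅` for positive reals `δ₁,…,δₙ`, then for every
`(gₙ) ⊆ C(K)` with `g₀ ≡ 0` converging pointwise to `G`,
`sup_k Σₙ |g_{n+1}(k) − gₙ(k)| ≥ (1/4) Σᵢ₌₁ⁿ δᵢ`. -/
theorem stmt7 {K : Type*} [MetricSpace K] [CompactSpace K] (G : K → ℝ)
    (δ : ℕ → ℝ) (hδ : ∀ i, 0 < δ i) (n : ℕ)
    (hne : (oscDerivedSetSeq G δ n).Nonempty)
    (g : ℕ → K → ℝ) (hg : ∀ m, Continuous (g m)) (hg0 : g 0 = 0)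
    (hlim : ∀ k, Tendsto (fun m => g m k) atTop (nhds (G k))) :
    ∀ C : ℝ, (∀ (k : K) (N : ℕ), ∑ m ∈ Finset.range N, |g (m+1) k - g m k| ≤ C) →
      (1 / 4) * ∑ i ∈ Finset.range n, δ (i + 1) ≤ C :=
  stmt7_general G δ n hne g hg hlim
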